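/- Suppose n ≥ 1, e ≥ 1, and |S(n,e)| = p is a prime number. Then: (i) every PL(n,e)-code C is periodic with period p in every direction, i.e., C + p·e_i = C for every standard basis vector e_i of ℤ^n; and (ii) there exists a PL(n,e)-code if and only if there exists a PL(n,e)-code that is a subgroup of the additive group ℤ^n (a linear PL(n,e)-code). -/

import Mathlib

/-- The Lee sphere `S(n,e) = {x ∈ ℤ^n : |x_1| + ⋯ + |x_n| ≤ e}`. -/
def LeeSphere (n e : ℕ) : Set (Fin n → ℤ) :=
  {x | (∑ i, |x i|) ≤ (e : ℤ)}

/-- A `PL(n,e)`-code: every point of `ℤ^n` is within Lee distance `e` of exactly one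
codeword. -/
def IsPLCode (n e : ℕ) (C : Set (Fin n → ℤ)) : Prop :=
  ∀ x : Fin n → ℤ, ∃! c, c ∈ C ∧ (∑ i, |x i - c i|) ≤ (e : ℤ)

/-! A code `C` with sphere `S` tiles `ℤ^n`, so in `𝔽_p[ℤ^n]` the element `β = ∑_{b ∈ S} [b]`
turns the indicator of `C` into the constant function `1`, which `β` kills because `|S| = p`.
Hence `β^p = ∑_{b ∈ S} [p • b]` (Frobenius) kills the indicator of `C`: for every `x`, the number of
`b ∈ S` with `x - p • b ∈ C` is divisible by `p`, so it is `0` or `p`, and `C` is `pℤ^n`-periodic.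

Periodicity makes `C` a tiling of `(ℤ/p)^n` by the image of `S`. Some character `ψ` must then vanish
on the image of `S`; its `p` values are `p`-th roots of unity with sum zero, hence every root occurs
exactly once, i.e. `S` is a system of representatives for the kernel of `ψ`, a linear code. -/
open Finset AddMonoidAlgebra Pointwise

def IsTiling {G : Type*} [AddGroup G] (B : Finset G) (C : Set G) : Prop :=
  ∀ x, ∃! c, c ∈ C ∧ x - c ∈ B

namespace AddMonoidAlgebra

variable {k G : Type*} [CommSemiring k]

noncomputable def pairing (W : G → k) : k[G] →ₗ[k] k :=
  Finsupp.linearCombination k W ∘ₗ (coeffLinearEquiv k).toLinearMap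

@[simp]
lemma pairing_single (W : G → k) (g : G) (r : k) : pairing W (single g r) = r * W g := by
  simp [pairing]

lemma pairing_sum_single_mul [Add G] (W : G → k) (B : Finset G) (α : k[G]) :
    pairing W ((∑ b ∈ B, single b 1) * α) = pairing (fun y ↦ ∑ b ∈ B, W (b + y)) α := by
  induction α using induction_linear with
  | zero => simp
  | add α α' h h' => simp only [mul_add, map_add, h, h']
  | single y r => simp [sum_mul, single_mul_single, mul_sum]

end AddMonoidAlgebra

section Tiling

variable {G : Type*} [AddCommGroup G] {B : Finset G} {C : Set G}

lemma isTiling_iff_existsUnique_sub_mem : IsTiling B C ↔ ∀ x, ∃! b, b ∈ B ∧ x - b ∈ C :=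
  forall_congr' fun x ↦ (Equiv.subLeft x).existsUnique_congr fun c ↦ by simp [and_comm]

lemma IsTiling.card_filter_sub_mem [DecidablePred (· ∈ C)] (h : IsTiling B C) (x : G) :
    #{b ∈ B | x - b ∈ C} = 1 := by
  rw [card_eq_one_iff_existsUnique]
  simpa only [mem_filter] using isTiling_iff_existsUnique_sub_mem.mp h x

theorem IsTiling.prime_dvd_card_filter {p : ℕ} [hp : Fact p.Prime] [DecidablePred (· ∈ C)]
    (h : IsTiling B C) (hB : #B = p) (x : G) : p ∣ #{b ∈ B | x - p • b ∈ C} := by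
  have : CharP (ZMod p)[G] p := by
    refine charP_of_injective_algebraMap (R := ZMod p) ?_ p
    rw [coe_algebraMap]
    exact single_right_injective.comp (RingHom.injective _)
  set β : (ZMod p)[G] := ∑ b ∈ B, single b 1
  let W : G → ZMod p := fun y ↦ if x - y ∈ C then 1 else 0
  have hβW : ∀ γ, pairing W (β * γ) = pairing 1 γ := fun γ ↦ by
    rw [pairing_sum_single_mul]
    congr 1
    ext y
    simp [W, sub_add_eq_sub_sub_swap, h.card_filter_sub_mem (x - y)]
  have hβ1 : ∀ γ, pairing 1 (β * γ) = 0 := fun γ ↦ by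
    rw [pairing_sum_single_mul]
    simp [hB, pairing, Finsupp.linearCombination_apply]
  have hfrob : β ^ p = ∑ b ∈ B, single (p • b) 1 := by
    simp only [β, sum_pow_char, single_pow, one_pow]
  have hβp : β ^ p = β * (β * β ^ (p - 2)) := by
    rw [← pow_succ', ← pow_succ', Nat.sub_add_cancel hp.out.two_le]
  rw [← ZMod.natCast_eq_zero_iff, ← hβ1 (β ^ (p - 2)), ← hβW, ← hβp, hfrob]
  simp [W]

theorem IsTiling.nsmul_sub_mem_stabilizer {p : ℕ} [Fact p.Prime] (h : IsTiling B C)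
    (hB : #B = p) {b b' : G} (hb : b ∈ B) (hb' : b' ∈ B) :
    p • (b' - b) ∈ AddAction.stabilizer G C := by
  classical
  rw [AddAction.mem_stabilizer_set]
  intro y
  have hshift : ∀ b'', y + p • b' - p • b'' = p • (b' - b'') +ᵥ y := fun b'' ↦ by
    rw [vadd_eq_add, smul_sub]; abel
  have hdvd := h.prime_dvd_card_filter hB (y + p • b')
  simp only [hshift] at hdvd
  rcases Nat.eq_zero_or_pos #{b'' ∈ B | p • (b' - b'') +ᵥ y ∈ C} with h0 | hpos
  · rw [card_eq_zero, filter_eq_empty_iff] at h0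
    simpa using iff_of_false (h0 hb) (h0 hb')
  · have hall := card_filter_eq_iff.mp
      ((Nat.le_of_dvd hpos hdvd).antisymm' (hB ▸ card_filter_le _ _) |>.trans hB.symm)
    simpa using iff_of_true (hall b hb) (hall b' hb')

lemma IsTiling.nonempty (h : IsTiling B C) : C.Nonempty :=
  let ⟨c, ⟨hc, _⟩, _⟩ := h 0
  ⟨c, hc⟩

section Image

variable {Q : Type*} [AddCommGroup Q] {φ : G →+ Q}

lemma IsTiling.injOn (h : IsTiling B C) (hC : φ.ker ≤ AddAction.stabilizer G C) :
    Set.InjOn φ B := by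
  intro b hb b' hb' hbb
  obtain ⟨c, hc⟩ := h.nonempty
  have hk : b - b' ∈ φ.ker := by simp [AddMonoidHom.mem_ker, hbb]
  have := (h (b + c)).unique ⟨hc, by simpa using hb⟩
    ⟨(AddAction.mem_stabilizer_set.mp (hC hk) c).mpr hc,
      by rwa [vadd_eq_add, show b + c - (b - b' + c) = b' by abel]⟩
  exact sub_eq_zero.mp (by simpa using this)

lemma IsTiling.image [DecidableEq Q] (h : IsTiling B C) (hφ : Function.Surjective φ)
    (hC : φ.ker ≤ AddAction.stabilizer G C) : IsTiling (B.image φ) (φ '' C) := by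
  intro x
  obtain ⟨x, rfl⟩ := hφ x
  obtain ⟨c, ⟨hc, hxc⟩, huniq⟩ := h x
  refine ⟨φ c, ⟨⟨c, hc, rfl⟩, mem_image.mpr ⟨x - c, hxc, map_sub φ x c⟩⟩, ?_⟩
  rintro _ ⟨⟨c', hc', rfl⟩, hxc'⟩
  obtain ⟨b, hb, hφb⟩ := mem_image.mp hxc'
  have hk : x - c' - b ∈ φ.ker := by simp [AddMonoidHom.mem_ker, hφb]
  have := huniq ((x - c' - b) +ᵥ c') ⟨(AddAction.mem_stabilizer_set.mp (hC hk) c').mpr hc',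
    by rwa [vadd_eq_add, show x - (x - c' - b + c') = b by abel]⟩
  rw [← this, vadd_eq_add, map_add, AddMonoidHom.mem_ker.mp hk, zero_add]

end Image

end Tiling

section FiniteGroup

variable {Q : Type*} [AddCommGroup Q] [Fintype Q] {A : Finset Q} {D : Set Q}

lemma IsTiling.sum_mul_sum [DecidablePred (· ∈ D)] (h : IsTiling A D) (ψ : AddChar Q ℂ) :
    (∑ a ∈ A, ψ a) * ∑ d ∈ univ.filter (· ∈ D), ψ d = ∑ g, ψ g := by
  rw [Finset.sum_mul_sum, ← sum_product']
  refine sum_bij (fun ad _ ↦ ad.1 + ad.2) (fun _ _ ↦ mem_univ _) ?_ ?_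
    (fun _ _ ↦ (AddChar.map_add_eq_mul ψ _ _).symm)
  · rintro ⟨a, d⟩ had ⟨a', d'⟩ had' hsum
    simp only [mem_product, mem_filter, mem_univ, true_and] at had had' hsum
    have hd : d = d' := (h (a + d)).unique ⟨had.2, by simpa using had.1⟩
      ⟨had'.2, by simpa [hsum] using had'.1⟩
    subst hd
    simp_all
  · intro g _
    obtain ⟨c, ⟨hc, hgc⟩, -⟩ := h g
    exact ⟨(g - c, c), by simp [hc, hgc]⟩

lemma IsTiling.exists_addChar_sum_eq_zero (h : IsTiling A D) (hA : 1 < #A) :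
    ∃ ψ : AddChar Q ℂ, ∑ a ∈ A, ψ a = 0 := by
  classical
  by_contra! hA0
  -- Then every nontrivial character vanishes on `D`, and character orthogonality at a point
  -- outside `D` forces `D = ∅`.
  set D' := univ.filter (· ∈ D)
  have hD' : ∀ ψ : AddChar Q ℂ, ψ ≠ 0 → ∑ d ∈ D', ψ d = 0 := fun ψ hψ ↦
    (mul_eq_zero.mp ((h.sum_mul_sum ψ).trans (AddChar.sum_eq_zero_iff_ne_zero.mpr hψ))).resolve_left
      (hA0 ψ)
  obtain ⟨c, ⟨hc, hcA⟩, huniq⟩ := h 0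
  obtain ⟨a, ha, hac⟩ := exists_mem_ne hA (0 - c)
  have ha' : -a ∉ D := fun ha' ↦
    hac (by simpa using congrArg Neg.neg (huniq (-a) ⟨ha', by simpa⟩))
  have hsum_zero : ∑ ψ : AddChar Q ℂ, ∑ d ∈ D', ψ (d + a) = 0 := by
    rw [sum_comm]
    refine sum_eq_zero fun d hd ↦ ?_
    rw [AddChar.sum_apply_eq_ite, if_neg]
    rintro hda
    exact ha' (by simpa [D', eq_neg_of_add_eq_zero_left hda] using hd)
  have hsum_card : ∑ ψ : AddChar Q ℂ, ∑ d ∈ D', ψ (d + a) = #D' := by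
    simp_rw [AddChar.map_add_eq_mul, ← sum_mul]
    rw [sum_eq_single 0 (fun ψ _ hψ ↦ by rw [hD' ψ hψ, zero_mul]) (by simp)]
    simp
  exact card_ne_zero_of_mem (by simpa [D'] using hc : c ∈ D') (by exact_mod_cast hsum_card.symm.trans hsum_zero)

end FiniteGroup

open Polynomial in
lemma IsPrimitiveRoot.coeff_eq_of_sum_mul_pow_eq_zero {K : Type*} [Field K] [CharZero K] {p : ℕ}
    (hp : p.Prime) {ζ : K} (hζ : IsPrimitiveRoot ζ p) {c : ℕ → ℚ}
    (h : ∑ t ∈ range p, (c t : K) * ζ ^ t = 0) {t : ℕ} (ht : t < p) : c t = c 0 := by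
  have := Fact.mk hp
  set f : ℚ[X] := ∑ t ∈ range p, C (c t) * X ^ t
  have hcoeff : ∀ t < p, f.coeff t = c t := fun t ht ↦ by
    simp [f, ht]
  have hdvd : cyclotomic p ℚ ∣ f := by
    rw [cyclotomic_eq_minpoly_rat hζ hp.pos]
    exact minpoly.dvd ℚ ζ (by simpa [f] using h)
  have hdeg : f.natDegree ≤ (cyclotomic p ℚ).natDegree := by
    rw [natDegree_cyclotomic, Nat.totient_prime hp]
    refine natDegree_sum_le_of_forall_le _ _ fun t ht ↦ ?_
    exact (natDegree_C_mul_X_pow_le _ _).trans (by simp at ht; omega)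
  obtain ⟨a, hf⟩ : ∃ a, f = cyclotomic p ℚ * C a :=
    ⟨_, eq_mul_leadingCoeff_of_monic_of_dvd_of_natDegree_le (cyclotomic.monic p ℚ) hdvd hdeg⟩
  have hlead : ∀ t < p, c t = a := fun t ht ↦ by
    rw [← hcoeff t ht, hf, coeff_mul_C, cyclotomic_prime]
    simp [finsetSum_coeff, coeff_X_pow, ht]
  rw [hlead t ht, hlead 0 hp.pos]

lemma existsUnique_eq_of_pow_eq_one_of_sum_eq_zero {ι : Type*} {p : ℕ} (hp : p.Prime)
    {s : Finset ι} (hs : #s = p) {f : ι → ℂ} (hf : ∀ i ∈ s, f i ^ p = 1)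
    (hsum : ∑ i ∈ s, f i = 0) {z : ℂ} (hz : z ^ p = 1) : ∃! i, i ∈ s ∧ f i = z := by
  classical
  have : NeZero p := ⟨hp.ne_zero⟩
  have hζ := Complex.isPrimitiveRoot_exp p hp.ne_zero
  set ζ := Complex.exp (2 * Real.pi * Complex.I / p)
  choose! k hkp hk using fun i hi ↦ hζ.eq_pow_of_pow_eq_one (hf i hi)
  set N : ℕ → ℕ := fun t ↦ #{i ∈ s | k i = t}
  have hmaps : ∀ i ∈ s, k i ∈ range p := fun i hi ↦ mem_range.mpr (hkp i hi)
  have hsumN : ∑ t ∈ range p, ((N t : ℚ) : ℂ) * ζ ^ t = 0 := by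
    rw [← hsum, ← sum_fiberwise_of_maps_to hmaps]
    refine sum_congr rfl fun t _ ↦ ?_
    rw [sum_congr rfl fun i hi ↦ by rw [← hk i (mem_filter.mp hi).1, (mem_filter.mp hi).2]]
    simp [N]
  have hN : ∀ t < p, N t = N 0 := fun t ht ↦ by
    exact_mod_cast hζ.coeff_eq_of_sum_mul_pow_eq_zero hp hsumN ht
  have hN0 : N 0 = 1 := by
    have hcard := card_eq_sum_card_fiberwise hmaps
    rw [sum_congr rfl fun t ht ↦ hN t (mem_range.mp ht), sum_const, card_range, hs,
      smul_eq_mul] at hcard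
    exact (Nat.mul_eq_left hp.ne_zero).mp hcard.symm
  obtain ⟨t, ht, rfl⟩ := hζ.eq_pow_of_pow_eq_one hz
  have hNt : ∃! i, i ∈ s ∧ k i = t := by
    simpa [N] using card_eq_one_iff_existsUnique.mp ((hN t ht).trans hN0)
  refine (existsUnique_congr fun i ↦ ?_).mp hNt
  refine and_congr_right fun hi ↦ ?_
  rw [← hk i hi]
  exact ⟨fun h ↦ h ▸ rfl, hζ.pow_inj (hkp i hi) ht⟩

lemma AddChar.isTiling_ker {G : Type*} [AddCommGroup G] {p : ℕ} (hp : p.Prime) {B : Finset G}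
    (hB : #B = p) (χ : AddChar G ℂ) (hχ : ∀ x, χ x ^ p = 1) (hsum : ∑ b ∈ B, χ b = 0) :
    IsTiling B χ.toAddMonoidHom.ker := by
  refine isTiling_iff_existsUnique_sub_mem.mpr fun x ↦ ?_
  refine (existsUnique_congr fun b ↦ and_congr_right fun _ ↦ ?_).mp
    (existsUnique_eq_of_pow_eq_one_of_sum_eq_zero hp hB (fun b _ ↦ hχ b) hsum (hχ x))
  have hb : χ b ≠ 0 := fun h0 ↦ by simpa [h0, hp.ne_zero] using hχ b
  rw [SetLike.mem_coe, AddMonoidHom.mem_ker, AddChar.toAddMonoidHom_apply, ofMul_eq_zero,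
    AddChar.map_sub_eq_div, div_eq_one_iff_eq hb]
  exact eq_comm

section LeeSphere

variable {n e p : ℕ}

noncomputable def leeSphereFinset (n e : ℕ) : Finset (Fin n → ℤ) :=
  {x ∈ Fintype.piFinset fun _ ↦ Icc (-(e : ℤ)) e | ∑ i, |x i| ≤ e}

lemma mem_leeSphereFinset {x : Fin n → ℤ} : x ∈ leeSphereFinset n e ↔ ∑ i, |x i| ≤ e := by
  refine ⟨fun hx ↦ (mem_filter.mp hx).2, fun hx ↦ mem_filter.mpr ⟨?_, hx⟩⟩
  refine Fintype.mem_piFinset.mpr fun i ↦ mem_Icc.mpr (abs_le.mp ?_)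
  exact (single_le_sum (fun j _ ↦ abs_nonneg (x j)) (mem_univ i)).trans hx

lemma coe_leeSphereFinset : (leeSphereFinset n e : Set (Fin n → ℤ)) = LeeSphere n e := by
  ext x
  exact mem_leeSphereFinset

lemma card_leeSphereFinset : #(leeSphereFinset n e) = (LeeSphere n e).ncard := by
  rw [← coe_leeSphereFinset, Set.ncard_coe_finset]

lemma isPLCode_iff_isTiling {C : Set (Fin n → ℤ)} :
    IsPLCode n e C ↔ IsTiling (leeSphereFinset n e) C := by
  simp only [IsPLCode, IsTiling, mem_leeSphereFinset, Pi.sub_apply]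

lemma single_one_mem_leeSphereFinset (he : 1 ≤ e) (i : Fin n) :
    Pi.single i 1 ∈ leeSphereFinset n e := by
  rw [mem_leeSphereFinset]
  simpa [Pi.single_apply, apply_ite] using he

lemma ker_intCast_compLeft_le {H : AddSubgroup (Fin n → ℤ)} (hH : ∀ i, Pi.single i (p : ℤ) ∈ H) :
    (AddMonoidHom.compLeft (Int.castAddHom (ZMod p)) (Fin n)).ker ≤ H := by
  intro k hk
  have hdvd : ∀ i, (p : ℤ) ∣ k i := fun i ↦
    (ZMod.intCast_zmod_eq_zero_iff_dvd _ _).mp (congrFun hk i)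
  have hk : k = ∑ i, (k i / p) • Pi.single i (p : ℤ) := by
    ext j
    simp [Finset.sum_apply, Pi.single_apply, Int.ediv_mul_cancel (hdvd j)]
  rw [hk]
  exact H.sum_mem fun i _ ↦ H.zsmul_mem (hH i) _

variable [Fact p.Prime] {C : Set (Fin n → ℤ)}

lemma IsPLCode.single_mem_stabilizer (hC : IsPLCode n e C) (he : 1 ≤ e)
    (hcard : (LeeSphere n e).ncard = p) (i : Fin n) :
    Pi.single i (p : ℤ) ∈ AddAction.stabilizer (Fin n → ℤ) C := by
  have := (isPLCode_iff_isTiling.mp hC).nsmul_sub_mem_stabilizer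
    (card_leeSphereFinset.trans hcard) (b := 0) (mem_leeSphereFinset.mpr (by simp))
    (single_one_mem_leeSphereFinset he i)
  convert this using 1
  ext j
  simp [Pi.single_apply]

theorem IsPLCode.exists_addSubgroup (hC : IsPLCode n e C) (he : 1 ≤ e)
    (hcard : (LeeSphere n e).ncard = p) :
    ∃ H : AddSubgroup (Fin n → ℤ), IsPLCode n e H := by
  have hp : p.Prime := Fact.out
  set π := AddMonoidHom.compLeft (Int.castAddHom (ZMod p)) (Fin n)
  have hT := isPLCode_iff_isTiling.mp hC
  have hS := card_leeSphereFinset.trans hcard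
  have hper := ker_intCast_compLeft_le (hC.single_mem_stabilizer he hcard)
  have hπ : Function.Surjective π := ZMod.intCast_surjective.comp_left
  have hinj := hT.injOn hper
  obtain ⟨ψ, hψ⟩ := (hT.image hπ hper).exists_addChar_sum_eq_zero
    (by rw [card_image_of_injOn hinj, hS]; exact hp.one_lt)
  refine ⟨(ψ.compAddMonoidHom π).toAddMonoidHom.ker,
    isPLCode_iff_isTiling.mpr (AddChar.isTiling_ker hp hS _ (fun x ↦ ?_) ?_)⟩
  · rw [AddChar.compAddMonoidHom_apply, ← AddChar.map_nsmul_eq_pow]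
    convert ψ.map_zero_eq_one
    ext i
    simp
  · rwa [sum_image hinj] at hψ

end LeeSphere

theorem prime_sphere_PL_code_general (n e p : ℕ) (he : 1 ≤ e) (hp : p.Prime)
    (hcard : (LeeSphere n e).ncard = p) :
    (∀ C : Set (Fin n → ℤ), IsPLCode n e C →
        ∀ i : Fin n, ∀ x : Fin n → ℤ, x ∈ C ↔ x + Pi.single i (p : ℤ) ∈ C) ∧
      ((∃ C : Set (Fin n → ℤ), IsPLCode n e C) ↔
        ∃ C : Set (Fin n → ℤ), IsPLCode n e C ∧
          ∃ H : AddSubgroup (Fin n → ℤ), C = (H : Set (Fin n → ℤ))) := by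
  have := Fact.mk hp
  refine ⟨fun C hC i x ↦ ?_, fun ⟨C, hC⟩ ↦ ?_, fun ⟨C, hC, _⟩ ↦ ⟨C, hC⟩⟩
  · have := AddAction.mem_stabilizer_set.mp (hC.single_mem_stabilizer he hcard i) x
    rw [vadd_eq_add, add_comm] at this
    exact this.symm
  · obtain ⟨H, hH⟩ := hC.exists_addSubgroup he hcard
    exact ⟨H, hH, H, rfl⟩

/-- If `|S(n,e)| = p` is prime, then every `PL(n,e)`-code is `p`-periodic in every
coordinate direction, and a `PL(n,e)`-code exists iff a linear one (a subgroup of `ℤ^n`)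
exists. -/
theorem prime_sphere_PL_code (n e p : ℕ) (hn : 1 ≤ n) (he : 1 ≤ e) (hp : p.Prime)
    (hcard : (LeeSphere n e).ncard = p) :
    (∀ C : Set (Fin n → ℤ), IsPLCode n e C →
        ∀ i : Fin n, ∀ x : Fin n → ℤ, x ∈ C ↔ x + Pi.single i (p : ℤ) ∈ C) ∧
      ((∃ C : Set (Fin n → ℤ), IsPLCode n e C) ↔
        ∃ C : Set (Fin n → ℤ), IsPLCode n e C ∧
          ∃ H : AddSubgroup (Fin n → ℤ), C = (H : Set (Fin n → ℤ))) :=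
  prime_sphere_PL_code_general n e p he hp hcard
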